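/- With notation as above, the maps ∂_n = l_n − r_n satisfy ∂_{n−1} ∘ ∂_n = 0, i.e. (V_n, ∂_n) is a chain complex. -/

import Mathlib

/-!
A hierarchical quandle turns `Y × X`, with `(y, x) ⋆ (y', x') = (y *_x^{x'} y', x * x')`, into
a self-distributive magma: the two distributivity axioms are exactly its two coordinates.
Reading `Y^n × X^n` as `(Y × X)^n`, `λ_{n,i}` becomes the `i`-th face map of its rack complex
and `ρ_{n,i}` deletes the `i`-th entry. Rack faces and deletions, in any combination, satisfy
the presimplicial identity `d_i ∘ d_{j+1} = d_j ∘ d_i` for `i ≤ j`, hence so do the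
differences `λ_i - ρ_i`; and `∂ = Σ (-1)^i (λ_i - ρ_i)` squares to zero by the usual
sign-reversing pairing of the terms.
-/

namespace Stmt8

variable {X Y : Type*}

/-- The free `K`-module `V_n` on tuples in `Y^n × X^n`. -/
abbrev V (K : Type*) [CommRing K] (X Y : Type*) (n : ℕ) : Type _ :=
  ((Fin n → Y) × (Fin n → X)) →₀ K

/-- `λ_{n,i}` on generators: act on the entries before `i` by the `i`-th entry
and delete the `i`-th entry. -/
def lamTup (qop : X → X → X) (hop : X → X → Y → Y → Y) {n : ℕ} (i : Fin (n + 1))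
    (t : (Fin (n + 1) → Y) × (Fin (n + 1) → X)) : (Fin n → Y) × (Fin n → X) :=
  (fun j => if (j : ℕ) < (i : ℕ)
      then hop (t.2 j.castSucc) (t.2 i) (t.1 j.castSucc) (t.1 i)
      else t.1 j.succ,
   fun j => if (j : ℕ) < (i : ℕ) then qop (t.2 j.castSucc) (t.2 i) else t.2 j.succ)

/-- `ρ_{n,i}` on generators: delete the `i`-th entries of both tuples. -/
def rhoTup {n : ℕ} (i : Fin (n + 1))
    (t : (Fin (n + 1) → Y) × (Fin (n + 1) → X)) : (Fin n → Y) × (Fin n → X) :=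
  (fun j => t.1 (i.succAbove j), fun j => t.2 (i.succAbove j))

/-- The linear map `λ_{n,i} : V_{n+1} → V_n`. -/
noncomputable def lamMap (K : Type*) [CommRing K] (qop : X → X → X)
    (hop : X → X → Y → Y → Y) (n : ℕ) (i : Fin (n + 1)) :
    V K X Y (n + 1) →ₗ[K] V K X Y n :=
  Finsupp.lmapDomain K K (lamTup qop hop i)

/-- The linear map `ρ_{n,i} : V_{n+1} → V_n`. -/
noncomputable def rhoMap (K : Type*) [CommRing K] (n : ℕ) (i : Fin (n + 1)) :
    V K X Y (n + 1) →ₗ[K] V K X Y n :=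
  Finsupp.lmapDomain K K (rhoTup i)

/-- `l_n = Σ_i (-1)^{i+1} λ_{n,i}` (written with `0`-based indices). -/
noncomputable def lMap (K : Type*) [CommRing K] (qop : X → X → X)
    (hop : X → X → Y → Y → Y) (n : ℕ) : V K X Y (n + 1) →ₗ[K] V K X Y n :=
  ∑ i : Fin (n + 1), ((-1 : K) ^ (i : ℕ)) • lamMap K qop hop n i

/-- `r_n = Σ_i (-1)^{i+1} ρ_{n,i}` (written with `0`-based indices). -/
noncomputable def rMap (K : Type*) [CommRing K] (n : ℕ) :
    V K X Y (n + 1) →ₗ[K] V K X Y n :=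
  ∑ i : Fin (n + 1), ((-1 : K) ^ (i : ℕ)) • rhoMap (X := X) (Y := Y) K n i

/-- The boundary map `∂_n = l_n − r_n`. -/
noncomputable def bnd (K : Type*) [CommRing K] (qop : X → X → X)
    (hop : X → X → Y → Y → Y) (n : ℕ) : V K X Y (n + 1) →ₗ[K] V K X Y n :=
  lMap K qop hop n - rMap K n

theorem alternating_sum_comp_alternating_sum_eq_zero {R M₀ M₁ M₂ : Type*} [CommRing R]
    [AddCommGroup M₀] [AddCommGroup M₁] [AddCommGroup M₂]
    [Module R M₀] [Module R M₁] [Module R M₂] {n : ℕ}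
    (d : Fin (n + 1) → M₁ →ₗ[R] M₀) (d' : Fin (n + 2) → M₂ →ₗ[R] M₁)
    (h : ∀ i j : Fin (n + 1), i ≤ j → d i ∘ₗ d' j.succ = d j ∘ₗ d' i.castSucc) :
    (∑ i : Fin (n + 1), (-1 : R) ^ (i : ℕ) • d i) ∘ₗ
      (∑ j : Fin (n + 2), (-1 : R) ^ (j : ℕ) • d' j) = 0 := by
  set T : Fin (n + 1) × Fin (n + 2) → M₂ →ₗ[R] M₀ :=
    fun p => (-1 : R) ^ ((p.1 : ℕ) + p.2) • d p.1 ∘ₗ d' p.2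
  have hcancel : ∀ i j : Fin (n + 1), i ≤ j → T (i, j.succ) + T (j, i.castSucc) = 0 := by
    intro i j hij
    have hsign : (-1 : R) ^ ((i : ℕ) + (j + 1)) = -(-1) ^ ((j : ℕ) + i) := by ring
    simp only [T, h i j hij, Fin.val_succ, Fin.val_castSucc, hsign, neg_smul, neg_add_cancel]
  have hexpand : (∑ i : Fin (n + 1), (-1 : R) ^ (i : ℕ) • d i) ∘ₗ
      (∑ j : Fin (n + 2), (-1 : R) ^ (j : ℕ) • d' j) = ∑ p, T p := by
    ext x
    simp [T, Fintype.sum_prod_type, map_sum, Finset.smul_sum, smul_smul, pow_add]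
  rw [hexpand]
  -- pair `(i, j)` with `(j - 1, i)` when `i < j` and with `(j, i + 1)` otherwise
  refine Finset.sum_involution
    (fun (p : Fin (n + 1) × Fin (n + 2)) _ =>
      if hlt : (p.1 : ℕ) < p.2 then (⟨(p.2 : ℕ) - 1, by omega⟩, ⟨p.1, by omega⟩)
      else (⟨p.2, by omega⟩, ⟨(p.1 : ℕ) + 1, by omega⟩)) ?_ ?_ (by simp) ?_
  · rintro ⟨i, j⟩ -
    dsimp only
    split_ifs with hij
    · obtain ⟨a, rfl⟩ : ∃ a : Fin (n + 1), j = a.succ :=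
        ⟨⟨(j : ℕ) - 1, by omega⟩, Fin.ext (by simp; omega)⟩
      exact hcancel i a (Fin.le_iff_val_le_val.2 (by simp at hij; omega))
    · obtain ⟨a, rfl⟩ : ∃ a : Fin (n + 1), j = a.castSucc :=
        ⟨⟨j, by omega⟩, rfl⟩
      rw [add_comm]
      exact hcancel a i (Fin.le_iff_val_le_val.2 (by simp at hij; omega))
  · rintro ⟨i, j⟩ - -
    dsimp only
    split_ifs <;> simp [Prod.ext_iff, Fin.ext_iff] <;> omega
  · rintro ⟨i, j⟩ -
    dsimp only
    split_ifs <;> simp only [Prod.ext_iff, Fin.ext_iff] at * <;> grind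

section RackFace

variable {A : Type*} (op : A → A → A)

def rackFace {n : ℕ} (i : Fin (n + 1)) (t : Fin (n + 1) → A) : Fin n → A :=
  fun k => if (k : ℕ) < i then op (t k.castSucc) (t i) else t k.succ

variable {op}

theorem rackFace_comp_rackFace (hdist : ∀ a b c, op (op a b) c = op (op a c) (op b c))
    {n : ℕ} {i j : Fin (n + 1)} (hij : i ≤ j) :
    rackFace op i ∘ rackFace op j.succ = rackFace op j ∘ rackFace op i.castSucc := by
  funext t k
  rw [Fin.le_iff_val_le_val] at hij
  simp only [Function.comp_apply, rackFace, Fin.val_succ, Fin.val_castSucc, Fin.succ_castSucc]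
  split_ifs <;> first | rfl | omega | exact hdist _ _ _ | exact (hdist _ _ _).symm

theorem rackFace_comp_removeNth {n : ℕ} {i j : Fin (n + 1)} (hij : i ≤ j) :
    rackFace op i ∘ Fin.removeNth j.succ = Fin.removeNth j ∘ rackFace op i.castSucc := by
  funext t k
  rw [Fin.le_iff_val_le_val] at hij
  simp only [Function.comp_apply, rackFace, Fin.removeNth, Fin.succAbove, Fin.lt_def,
    Fin.val_succ, Fin.val_castSucc, Fin.succ_castSucc]
  split_ifs <;> simp only [Fin.val_castSucc, Fin.val_succ, Fin.succ_castSucc] at * <;>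
    first | rfl | omega

theorem removeNth_comp_rackFace {n : ℕ} {i j : Fin (n + 1)} (hij : i ≤ j) :
    Fin.removeNth i ∘ rackFace op j.succ = rackFace op j ∘ Fin.removeNth i.castSucc := by
  funext t k
  rw [Fin.le_iff_val_le_val] at hij
  simp only [Function.comp_apply, rackFace, Fin.removeNth, Fin.succAbove, Fin.lt_def,
    Fin.val_succ, Fin.val_castSucc, Fin.succ_castSucc]
  split_ifs <;> simp only [Fin.val_castSucc, Fin.val_succ, Fin.succ_castSucc] at * <;>
    first | rfl | omega

theorem removeNth_comp_removeNth {n : ℕ} {i j : Fin (n + 1)} (hij : i ≤ j) :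
    Fin.removeNth (α := fun _ => A) i ∘ Fin.removeNth (α := fun _ => A) j.succ =
      Fin.removeNth (α := fun _ => A) j ∘ Fin.removeNth (α := fun _ => A) i.castSucc := by
  funext t
  have h : i.castSucc < j.succ := Fin.castSucc_lt_succ_iff.2 hij
  simp only [Function.comp_apply, Fin.removeNth_removeNth_eq_swap t i j.succ,
    Fin.succAbove_of_castSucc_lt _ _ h, Fin.predAbove_of_castSucc_lt _ _ h, Fin.pred_succ]

end RackFace

section Tuples

def pairOp (qop : X → X → X) (hop : X → X → Y → Y → Y) (p q : Y × X) : Y × X :=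
  (hop p.2 q.2 p.1 q.1, qop p.2 q.2)

theorem pairOp_self_distrib {qop : X → X → X} {hop : X → X → Y → Y → Y}
    (qdistrib : ∀ x1 x2 x3, qop (qop x1 x2) x3 = qop (qop x1 x3) (qop x2 x3))
    (hdistrib : ∀ x1 x2 x3 (y1 y2 y3 : Y),
      hop (qop x1 x2) x3 (hop x1 x2 y1 y2) y3 =
        hop (qop x1 x3) (qop x2 x3) (hop x1 x3 y1 y3) (hop x2 x3 y2 y3))
    (a b c : Y × X) :
    pairOp qop hop (pairOp qop hop a b) c =
      pairOp qop hop (pairOp qop hop a c) (pairOp qop hop b c) :=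
  Prod.ext (hdistrib _ _ _ _ _ _) (qdistrib _ _ _)

local notation "unzip" n => Equiv.arrowProdEquivProdArrow (Fin n) (fun _ => Y) (fun _ => X)

theorem lamTup_eq (qop : X → X → X) (hop : X → X → Y → Y → Y) {n : ℕ}
    (i : Fin (n + 1)) :
    lamTup qop hop i =
      (unzip n) ∘ rackFace (pairOp qop hop) i ∘ (unzip (n + 1)).symm := by
  funext t
  refine Prod.ext (funext fun k => ?_) (funext fun k => ?_) <;>
  · simp only [lamTup, rackFace, pairOp, Function.comp_apply, Equiv.arrowProdEquivProdArrow,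
      Equiv.coe_fn_mk, Equiv.coe_fn_symm_mk]
    split_ifs <;> rfl

theorem rhoTup_eq {n : ℕ} (i : Fin (n + 1)) :
    rhoTup (X := X) (Y := Y) i = (unzip n) ∘ Fin.removeNth i ∘ (unzip (n + 1)).symm :=
  rfl

variable {qop : X → X → X} {hop : X → X → Y → Y → Y} {n : ℕ} {i j : Fin (n + 1)}

theorem lamTup_comp_lamTup
    (hdist : ∀ a b c, pairOp qop hop (pairOp qop hop a b) c =
      pairOp qop hop (pairOp qop hop a c) (pairOp qop hop b c))
    (hij : i ≤ j) :
    lamTup qop hop i ∘ lamTup qop hop j.succ =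
      lamTup qop hop j ∘ lamTup qop hop i.castSucc := by
  funext t
  simp only [lamTup_eq, Function.comp_apply, Equiv.symm_apply_apply]
  exact congrArg _ (congrFun (rackFace_comp_rackFace hdist hij) _)

theorem lamTup_comp_rhoTup (hij : i ≤ j) :
    lamTup qop hop i ∘ rhoTup j.succ = rhoTup j ∘ lamTup qop hop i.castSucc := by
  funext t
  simp only [lamTup_eq, rhoTup_eq, Function.comp_apply, Equiv.symm_apply_apply]
  exact congrArg _ (congrFun (rackFace_comp_removeNth hij) _)

theorem rhoTup_comp_lamTup (hij : i ≤ j) :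
    rhoTup i ∘ lamTup qop hop j.succ = lamTup qop hop j ∘ rhoTup i.castSucc := by
  funext t
  simp only [lamTup_eq, rhoTup_eq, Function.comp_apply, Equiv.symm_apply_apply]
  exact congrArg _ (congrFun (removeNth_comp_rackFace hij) _)

theorem rhoTup_comp_rhoTup (hij : i ≤ j) :
    rhoTup (X := X) (Y := Y) i ∘ rhoTup j.succ = rhoTup j ∘ rhoTup i.castSucc := by
  funext t
  simp only [rhoTup_eq, Function.comp_apply, Equiv.symm_apply_apply]
  exact congrArg _ (congrFun (removeNth_comp_removeNth hij) _)

end Tuples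

section Boundary

variable (K : Type*) [CommRing K] (qop : X → X → X) (hop : X → X → Y → Y → Y)

noncomputable def faceMap (n : ℕ) (i : Fin (n + 1)) : V K X Y (n + 1) →ₗ[K] V K X Y n :=
  lamMap K qop hop n i - rhoMap K n i

theorem bnd_eq_sum_faceMap (n : ℕ) :
    bnd K qop hop n = ∑ i : Fin (n + 1), (-1 : K) ^ (i : ℕ) • faceMap K qop hop n i := by
  rw [bnd, lMap, rMap, ← Finset.sum_sub_distrib (G := V K X Y (n + 1) →ₗ[K] V K X Y n)]
  exact Finset.sum_congr rfl fun i _ => (smul_sub _ (lamMap K qop hop n i) (rhoMap K n i)).symm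

variable {K qop hop}

theorem faceMap_comp_faceMap
    (hdist : ∀ a b c, pairOp qop hop (pairOp qop hop a b) c =
      pairOp qop hop (pairOp qop hop a c) (pairOp qop hop b c))
    {n : ℕ} {i j : Fin (n + 1)} (hij : i ≤ j) :
    faceMap K qop hop n i ∘ₗ faceMap K qop hop (n + 1) j.succ =
      faceMap K qop hop n j ∘ₗ faceMap K qop hop (n + 1) i.castSucc := by
  simp only [faceMap, lamMap, rhoMap, LinearMap.sub_comp, LinearMap.comp_sub,
    ← Finsupp.lmapDomain_comp, lamTup_comp_lamTup hdist hij, lamTup_comp_rhoTup hij,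
    rhoTup_comp_lamTup hij, rhoTup_comp_rhoTup hij]
  abel

end Boundary

theorem boundary_squared_zero_general (K : Type*) [CommRing K] (qop : X → X → X) (hop : X → X → Y → Y → Y)
    (qdistrib : ∀ x1 x2 x3, qop (qop x1 x2) x3 = qop (qop x1 x3) (qop x2 x3))
    (hdistrib : ∀ x1 x2 x3 (y1 y2 y3 : Y),
      hop (qop x1 x2) x3 (hop x1 x2 y1 y2) y3 =
        hop (qop x1 x3) (qop x2 x3) (hop x1 x3 y1 y3) (hop x2 x3 y2 y3))
    (n : ℕ) :
    (bnd K qop hop n).comp (bnd K qop hop (n + 1)) = 0 := by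
  rw [bnd_eq_sum_faceMap, bnd_eq_sum_faceMap]
  exact alternating_sum_comp_alternating_sum_eq_zero _ _
    fun i j hij => faceMap_comp_faceMap (pairOp_self_distrib qdistrib hdistrib) hij

/-- `∂_{n−1} ∘ ∂_n = 0`, i.e. `(V_n, ∂_n)` is a chain complex. -/
theorem boundary_squared_zero (K : Type*) [CommRing K] (qop : X → X → X) (hop : X → X → Y → Y → Y)
    (qidem : ∀ x, qop x x = x)
    (qbij : ∀ a, Function.Bijective fun x => qop x a)
    (qdistrib : ∀ x1 x2 x3, qop (qop x1 x2) x3 = qop (qop x1 x3) (qop x2 x3))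
    (hidem : ∀ x y, hop x x y y = y)
    (hbij : ∀ x1 x2 (a : Y), Function.Bijective fun y => hop x1 x2 y a)
    (hdistrib : ∀ x1 x2 x3 (y1 y2 y3 : Y),
      hop (qop x1 x2) x3 (hop x1 x2 y1 y2) y3 =
        hop (qop x1 x3) (qop x2 x3) (hop x1 x3 y1 y3) (hop x2 x3 y2 y3))
    (n : ℕ) :
    (bnd K qop hop n).comp (bnd K qop hop (n + 1)) = 0 :=
  boundary_squared_zero_general K qop hop qdistrib hdistrib n

end Stmt8
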